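/- In the planar widely-spaced case, there exist constants δ, k > 0 such that for every x₀ = (x₀₁, x₀₂) with ‖x₀‖ < δ and every solution x with x(0) = x₀, the integral defining ψ₁(x₀) := x₀₁ + ∫₀^∞ e^{−as} b₁(x(s)) ds converges and |ψ₁(x₀) − x₀₁| ≤ k‖x₀‖^α. -/

import Mathlib

/-!
With `c := a + K₁ r ^ (α - 1)`, the bound `‖b y‖ ≤ K₁ ‖y‖ ^ α` and `κ ≥ 1` give
`⟪y, A y + b y⟫ ≤ c ‖y‖²` on the ball of radius `r`. For `r` small, `c < a / α < 0`, so the field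
points inward on the sphere of radius `r`, the ball is forward invariant, and Grönwall applied to
`‖x‖²` gives `‖x t‖ ≤ ‖x₀‖ e^{ct}`. Hence `|e^{-as} b₁(x s)| ≤ K₁ ‖x₀‖^α e^{-(a - αc)s}` with
`a - αc > 0`, whose integral over `[0, ∞)` is `K₁ ‖x₀‖^α / (a - αc)`.
-/

open MeasureTheory Set

/-- The point `(u, v)` of the Euclidean plane. -/
noncomputable def ePair (u v : ℝ) : EuclideanSpace ℝ (Fin 2) :=
  (WithLp.equiv 2 (Fin 2 → ℝ)).symm ![u, v]

/-- `x : [0,∞) → ℝ²` is a solution of `ẋ = A x + b(x)` with `A = diag(a, κa)`. -/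
def IsSolutionP (a κ : ℝ) (b : EuclideanSpace ℝ (Fin 2) → EuclideanSpace ℝ (Fin 2))
    (x : ℝ → EuclideanSpace ℝ (Fin 2)) : Prop :=
  ∀ t : ℝ, 0 ≤ t →
    HasDerivWithinAt x
      (ePair (a * x t 0 + b (x t) 0) (κ * a * x t 1 + b (x t) 1)) (Ici 0) t

open Real Filter Topology

local notation "ℝ²" => EuclideanSpace ℝ (Fin 2)

section InvariantBall

variable {E : Type*} [NormedAddCommGroup E] [InnerProductSpace ℝ E] {x v : ℝ → E}

theorem norm_le_of_inner_neg_of_norm_eq {r : ℝ}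
    (hx : ∀ t, 0 ≤ t → HasDerivWithinAt x (v t) (Ici 0) t) (h0 : ‖x 0‖ ≤ r)
    (hinward : ∀ t, 0 ≤ t → ‖x t‖ = r → inner ℝ (x t) (v t) < 0) :
    ∀ t, 0 ≤ t → ‖x t‖ ≤ r := by
  intro T hT
  have hr : 0 ≤ r := (norm_nonneg _).trans h0
  have hsq : ‖x T‖ ^ 2 ≤ r ^ 2 := by
    refine image_le_of_deriv_right_lt_deriv_boundary' (f := (‖x ·‖ ^ 2))
      (fun t ht => (hx t ht.1).continuousWithinAt.norm.pow 2 |>.mono Icc_subset_Ici_self)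
      (fun t ht => (hx t ht.1).norm_sq.mono (Ici_subset_Ici.2 ht.1))
      (by gcongr) continuousOn_const (fun t _ => hasDerivWithinAt_const _ _ (r ^ 2))
      (fun t ht hrt => ?_) ⟨hT, le_rfl⟩
    have hxt : ‖x t‖ = r := by rwa [sq_eq_sq₀ (norm_nonneg _) hr] at hrt
    linarith [hinward t ht.1 hxt]
  exact (sq_le_sq₀ (norm_nonneg _) hr).1 hsq

theorem norm_le_mul_exp_of_inner_le {c : ℝ}
    (hx : ∀ t, 0 ≤ t → HasDerivWithinAt x (v t) (Ici 0) t)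
    (hinner : ∀ t, 0 ≤ t → inner ℝ (x t) (v t) ≤ c * ‖x t‖ ^ 2) :
    ∀ t, 0 ≤ t → ‖x t‖ ≤ ‖x 0‖ * exp (c * t) := by
  intro T hT
  have hsq : ‖x T‖ ^ 2 ≤ ‖x 0‖ ^ 2 * exp (2 * c * T) := by
    have := le_gronwallBound_of_liminf_deriv_right_le (f := (‖x ·‖ ^ 2)) (K := 2 * c) (ε := 0)
      (fun t ht => (hx t ht.1).continuousWithinAt.norm.pow 2 |>.mono Icc_subset_Ici_self)
      (fun t ht _ hr =>
        ((hx t ht.1).norm_sq.mono (Ici_subset_Ici.2 ht.1)).liminf_right_slope_le hr)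
      le_rfl (fun t ht => by linarith [hinner t ht.1]) T ⟨hT, le_rfl⟩
    simpa [gronwallBound_ε0] using this
  have hexp : exp (2 * c * T) = exp (c * T) ^ 2 := by rw [← exp_nat_mul]; ring_nf
  rw [hexp, ← mul_pow] at hsq
  exact (sq_le_sq₀ (norm_nonneg _) (by positivity)).1 hsq

theorem norm_le_mul_exp_of_inner_le_of_norm_le {r c : ℝ} (hc : c < 0)
    (hx : ∀ t, 0 ≤ t → HasDerivWithinAt x (v t) (Ici 0) t) (h0 : ‖x 0‖ < r)
    (hinner : ∀ t, 0 ≤ t → ‖x t‖ ≤ r → inner ℝ (x t) (v t) ≤ c * ‖x t‖ ^ 2) :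
    ∀ t, 0 ≤ t → ‖x t‖ ≤ ‖x 0‖ * exp (c * t) := by
  have hr : 0 < r := (norm_nonneg _).trans_lt h0
  have hball := norm_le_of_inner_neg_of_norm_eq hx h0.le fun t ht hxt =>
    (hinner t ht hxt.le).trans_lt (by rw [hxt]; exact mul_neg_of_neg_of_pos hc (by positivity))
  exact norm_le_mul_exp_of_inner_le hx fun t ht => hinner t ht (hball t ht)

end InvariantBall

theorem Real.rpow_le_rpow_sub_one_mul {s r α : ℝ} (hs : 0 ≤ s) (hsr : s ≤ r) (hα : 1 ≤ α) :
    s ^ α ≤ r ^ (α - 1) * s := by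
  calc s ^ α = s ^ (α - 1) * s := by
        rw [← rpow_add_one' hs (by linarith), sub_add_cancel]
    _ ≤ r ^ (α - 1) * s := by gcongr

theorem exists_pos_lt_mul_rpow_lt {K p ε δ₀ : ℝ} (hp : 0 < p) (hε : 0 < ε) (hδ₀ : 0 < δ₀) :
    ∃ r, 0 < r ∧ r < δ₀ ∧ K * r ^ p < ε := by
  have hlim : Tendsto (fun r : ℝ => K * r ^ p) (𝓝[>] 0) (𝓝 0) := by
    simpa [zero_rpow hp.ne'] using
      ((continuousAt_rpow_const 0 p (Or.inr hp.le)).tendsto.const_mul K).mono_left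
        nhdsWithin_le_nhds
  obtain ⟨r, hKr, hr⟩ := ((hlim.eventually (gt_mem_nhds hε)).and (Ioo_mem_nhdsGT hδ₀)).exists
  exact ⟨r, hr.1, hr.2, hKr⟩

theorem integrableOn_Ici_and_norm_integral_le_of_norm_le_mul_exp {E : Type*}
    [NormedAddCommGroup E] [NormedSpace ℝ E] {f : ℝ → E} {C m : ℝ} (hm : 0 < m)
    (hf : AEStronglyMeasurable f (volume.restrict (Ici 0)))
    (hbound : ∀ s, 0 ≤ s → ‖f s‖ ≤ C * exp (-m * s)) :
    IntegrableOn f (Ici 0) ∧ ‖∫ s in Ici (0 : ℝ), f s‖ ≤ C / m := by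
  have hg : IntegrableOn (fun s => C * exp (-m * s)) (Ici 0) :=
    ((integrableOn_Ici_iff_integrableOn_Ioi).2
      (integrableOn_exp_mul_Ioi (neg_lt_zero.2 hm) 0)).const_mul C
  have hae : ∀ᵐ s ∂volume.restrict (Ici 0), ‖f s‖ ≤ C * exp (-m * s) :=
    (ae_restrict_iff' measurableSet_Ici).2 (ae_of_all _ hbound)
  refine ⟨hg.mono' hf hae, ?_⟩
  calc ‖∫ s in Ici (0 : ℝ), f s‖ ≤ ∫ s in Ici (0 : ℝ), C * exp (-m * s) :=
        norm_integral_le_of_norm_le hg hae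
    _ = C / m := by
        rw [integral_const_mul, integral_Ici_eq_integral_Ioi,
          integral_exp_mul_Ioi (neg_lt_zero.2 hm), mul_zero, exp_zero, neg_div_neg_eq,
          mul_one_div]

noncomputable def planarField (a κ : ℝ) (b : ℝ² → ℝ²) (y : ℝ²) : ℝ² :=
  ePair (a * y 0 + b y 0) (κ * a * y 1 + b y 1)

section Planar

variable {a κ : ℝ} {b : ℝ² → ℝ²}

theorem IsSolutionP.continuousOn {x : ℝ → ℝ²}
    (hx : IsSolutionP a κ b x) : ContinuousOn x (Ici 0) :=
  fun t ht => (hx t ht).continuousWithinAt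

theorem inner_ePair (y : ℝ²) (u v : ℝ) : inner ℝ y (ePair u v) = y 0 * u + y 1 * v := by
  simp [ePair, PiLp.inner_apply, Fin.sum_univ_two, mul_comm]

theorem EuclideanSpace.norm_sq_eq_fin_two (y : ℝ²) : ‖y‖ ^ 2 = y 0 ^ 2 + y 1 ^ 2 := by
  simp [EuclideanSpace.norm_sq_eq, Fin.sum_univ_two]

theorem inner_planarField_le (ha : a ≤ 0) (hκ : 1 ≤ κ) (y : ℝ²) :
    inner ℝ y (planarField a κ b y) ≤ a * ‖y‖ ^ 2 + ‖y‖ * ‖b y‖ := by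
  have hinner_b : y 0 * b y 0 + y 1 * b y 1 = inner ℝ y (b y) := by
    simp [PiLp.inner_apply, Fin.sum_univ_two, mul_comm]
  have hdiag : κ * a * y 1 ^ 2 ≤ a * y 1 ^ 2 := by
    nlinarith [mul_nonpos_of_nonpos_of_nonneg ha (sq_nonneg (y 1))]
  have hcs := real_inner_le_norm y (b y)
  rw [planarField, inner_ePair, EuclideanSpace.norm_sq_eq_fin_two]
  linarith

theorem inner_planarField_le_of_norm_le {δ₀ K₁ α r : ℝ} (ha : a ≤ 0) (hκ : 1 ≤ κ)
    (hα : 1 ≤ α) (hK₁ : 0 ≤ K₁) (hbnd : ∀ y : ℝ², ‖y‖ < δ₀ → ‖b y‖ ≤ K₁ * ‖y‖ ^ α)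
    (hrδ₀ : r < δ₀) {y : ℝ²} (hy : ‖y‖ ≤ r) :
    inner ℝ y (planarField a κ b y) ≤ (a + K₁ * r ^ (α - 1)) * ‖y‖ ^ 2 := by
  calc inner ℝ y (planarField a κ b y) ≤ a * ‖y‖ ^ 2 + ‖y‖ * ‖b y‖ :=
        inner_planarField_le ha hκ y
    _ ≤ a * ‖y‖ ^ 2 + ‖y‖ * (K₁ * (r ^ (α - 1) * ‖y‖)) := by
        gcongr
        exact (hbnd y (hy.trans_lt hrδ₀)).trans
          (by gcongr; exact Real.rpow_le_rpow_sub_one_mul (norm_nonneg y) hy hα)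
    _ = (a + K₁ * r ^ (α - 1)) * ‖y‖ ^ 2 := by ring

theorem IsSolutionP.norm_le_mul_exp {δ₀ K₁ α r : ℝ} {x : ℝ → ℝ²} (hx : IsSolutionP a κ b x)
    (ha : a ≤ 0) (hκ : 1 ≤ κ) (hα : 1 ≤ α) (hK₁ : 0 ≤ K₁)
    (hbnd : ∀ y : ℝ², ‖y‖ < δ₀ → ‖b y‖ ≤ K₁ * ‖y‖ ^ α) (hrδ₀ : r < δ₀)
    (hc : a + K₁ * r ^ (α - 1) < 0) (h0 : ‖x 0‖ < r) :
    ∀ t, 0 ≤ t → ‖x t‖ ≤ ‖x 0‖ * exp ((a + K₁ * r ^ (α - 1)) * t) :=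
  norm_le_mul_exp_of_inner_le_of_norm_le hc hx h0 fun _ _ hxt =>
    inner_planarField_le_of_norm_le ha hκ hα hK₁ hbnd hrδ₀ hxt

theorem norm_exp_mul_apply_zero_le {δ₀ K₁ α ρ c s : ℝ} (hα : 0 ≤ α) (hK₁ : 0 ≤ K₁)
    (hbnd : ∀ y : ℝ², ‖y‖ < δ₀ → ‖b y‖ ≤ K₁ * ‖y‖ ^ α) {y : ℝ²} (hyδ₀ : ‖y‖ < δ₀)
    (hy : ‖y‖ ≤ ρ * exp (c * s)) :
    ‖exp (-a * s) * b y 0‖ ≤ K₁ * ρ ^ α * exp (-(a - α * c) * s) := by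
  have hρ : 0 ≤ ρ := nonneg_of_mul_nonneg_left ((norm_nonneg y).trans hy) (exp_pos _)
  rw [norm_mul, norm_of_nonneg (exp_pos _).le]
  calc exp (-a * s) * ‖b y 0‖ ≤ exp (-a * s) * (K₁ * (ρ * exp (c * s)) ^ α) := by
        gcongr
        exact (PiLp.norm_apply_le _ _).trans ((hbnd y hyδ₀).trans (by gcongr))
    _ = K₁ * ρ ^ α * exp (-(a - α * c) * s) := by
        rw [mul_rpow hρ (exp_pos _).le, ← exp_mul,
          show -(a - α * c) * s = -a * s + c * s * α by ring, exp_add]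
        ring

end Planar

theorem stmt14_general (a κ : ℝ) (ha : a < 0) (hκ1 : 1 ≤ κ)
    (b : EuclideanSpace ℝ (Fin 2) → EuclideanSpace ℝ (Fin 2))
    (hb : ContDiff ℝ 1 b)
    (δ₀ K₁ α : ℝ) (hδ₀ : 0 < δ₀) (hK₁ : 0 < K₁)
    (hα : 1 < α)
    (hbnd : ∀ y : EuclideanSpace ℝ (Fin 2), ‖y‖ < δ₀ → ‖b y‖ ≤ K₁ * ‖y‖ ^ α) :
    ∃ δ > 0, ∃ k > 0, ∀ x₀ : EuclideanSpace ℝ (Fin 2), ‖x₀‖ < δ →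
      ∀ x : ℝ → EuclideanSpace ℝ (Fin 2), IsSolutionP a κ b x → x 0 = x₀ →
        IntegrableOn (fun s => Real.exp (-a * s) * b (x s) 0) (Ici 0) volume ∧
        |(x₀ 0 + ∫ s in Ici (0 : ℝ), Real.exp (-a * s) * b (x s) 0) - x₀ 0|
          ≤ k * ‖x₀‖ ^ α := by
  have hα0 : 0 < α := one_pos.trans hα
  have haα : a < a / α := (lt_div_iff₀ hα0).2 (by nlinarith)
  obtain ⟨r, hr0, hrδ₀, hrK⟩ :=
    exists_pos_lt_mul_rpow_lt (K := K₁) (sub_pos.2 hα) (sub_pos.2 haα) hδ₀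
  set c := a + K₁ * r ^ (α - 1)
  have hcα : c < a / α := by linarith
  have hc : c < 0 := hcα.trans (div_neg_of_neg_of_pos ha hα0)
  have hm : 0 < a - α * c := by linarith [(lt_div_iff₀' hα0).1 hcα]
  refine ⟨r, hr0, K₁ / (a - α * c), div_pos hK₁ hm, fun x₀ hx₀ x hx hx0 => ?_⟩
  subst hx0
  have hdecay := hx.norm_le_mul_exp ha.le hκ1 hα.le hK₁.le hbnd hrδ₀ hc hx₀
  have hsmall : ∀ s, 0 ≤ s → ‖x s‖ < δ₀ := fun s hs =>
    (hdecay s hs).trans_lt <| (mul_le_of_le_one_right (norm_nonneg _)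
      (exp_le_one_iff.2 (mul_nonpos_of_nonpos_of_nonneg hc.le hs))).trans_lt (hx₀.trans hrδ₀)
  have hcont : ContinuousOn (fun s => exp (-a * s) * b (x s) 0) (Ici 0) :=
    (continuous_exp.comp (continuous_const_mul (-a))).continuousOn.mul
      ((EuclideanSpace.proj 0).continuous.comp hb.continuous |>.comp_continuousOn
        hx.continuousOn)
  rw [add_sub_cancel_left, ← Real.norm_eq_abs, div_mul_eq_mul_div]
  exact integrableOn_Ici_and_norm_integral_le_of_norm_le_mul_exp hm
    (hcont.aestronglyMeasurable measurableSet_Ici) fun s hs =>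
      norm_exp_mul_apply_zero_le hα0.le hK₁.le hbnd (hsmall s hs) (hdecay s hs)

/-- Planar widely-spaced case (`A = diag(a, κa)`, `a < 0`,
`κ ≥ α`): there are `δ, k > 0` such that for any solution `x` with initial datum
`x₀`, `‖x₀‖ < δ`, the integral defining
`ψ₁(x₀) = x₀₁ + ∫₀^∞ e^{−as} b₁(x(s)) ds` converges and
`|ψ₁(x₀) − x₀₁| ≤ k ‖x₀‖^α`. -/
theorem stmt14 (a κ : ℝ) (ha : a < 0) (hκ1 : 1 ≤ κ)
    (b : EuclideanSpace ℝ (Fin 2) → EuclideanSpace ℝ (Fin 2))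
    (hb : ContDiff ℝ 1 b)
    (δ₀ K₁ K₂ α β : ℝ) (hδ₀ : 0 < δ₀) (hK₁ : 0 < K₁) (hK₂ : 0 < K₂)
    (hα : 1 < α) (hβ : 0 < β)
    (hbnd : ∀ y : EuclideanSpace ℝ (Fin 2), ‖y‖ < δ₀ → ‖b y‖ ≤ K₁ * ‖y‖ ^ α)
    (hDbnd : ∀ y : EuclideanSpace ℝ (Fin 2), ‖y‖ < δ₀ → ‖fderiv ℝ b y‖ ≤ K₂ * ‖y‖ ^ β)
    (hκα : α ≤ κ) :
    ∃ δ > 0, ∃ k > 0, ∀ x₀ : EuclideanSpace ℝ (Fin 2), ‖x₀‖ < δ →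
      ∀ x : ℝ → EuclideanSpace ℝ (Fin 2), IsSolutionP a κ b x → x 0 = x₀ →
        IntegrableOn (fun s => Real.exp (-a * s) * b (x s) 0) (Ici 0) volume ∧
        |(x₀ 0 + ∫ s in Ici (0 : ℝ), Real.exp (-a * s) * b (x s) 0) - x₀ 0|
          ≤ k * ‖x₀‖ ^ α :=
  stmt14_general a κ ha hκ1 b hb δ₀ K₁ α hδ₀ hK₁ hα hbnd
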